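/- Let (U, R, 𝓕) be a CF-approximation space. If S*(K, F) ≠ ∅ for every K ∈ 𝓕^♯ and every F ∈ 𝓕 with R̄(K) ⊆ R̄(F), then (𝔠(U, R, 𝓕), ⊆) is an sL-domain. -/

import Mathlib

open Set

/-- The upper approximation operator: `upp R A = {x | ∃ y ∈ A, x R y}`. -/
def upp {U : Type*} (R : U → U → Prop) (A : Set U) : Set U := {x | ∃ y ∈ A, R x y}

/-- `(U, R, 𝓕)` is a CF-approximation space. -/
def IsCFApprox {U : Type*} (R : U → U → Prop) (𝓕 : Set (Set U)) : Prop :=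
  Transitive R ∧ 𝓕.Nonempty ∧ (∀ F ∈ 𝓕, F.Finite) ∧
    ∀ F ∈ 𝓕, ∀ K : Set U, K.Finite → K ⊆ upp R F →
      ∃ G ∈ 𝓕, K ⊆ upp R G ∧ G ⊆ upp R F

/-- `E` is a CF-closed set of `(U, R, 𝓕)`. -/
def CFClosed {U : Type*} (R : U → U → Prop) (𝓕 : Set (Set U)) (E : Set U) : Prop :=
  ∀ K : Set U, K.Finite → K ⊆ E →
    ∃ F ∈ 𝓕, K ⊆ upp R F ∧ upp R F ⊆ E ∧ F ⊆ E

/-- The join saturation `𝓕^♯`: all unions of nonempty finite subfamilies of `𝓕`. -/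
def joinSat {U : Type*} (𝓕 : Set (Set U)) : Set (Set U) :=
  {A | ∃ 𝓐 : Set (Set U), 𝓐 ⊆ 𝓕 ∧ 𝓐.Finite ∧ 𝓐.Nonempty ∧ A = ⋃₀ 𝓐}

/-- `S(M, F)`: the set of `G ∈ 𝓕` satisfying (sL-1) and (sL-2). -/
def SFam {U : Type*} (R : U → U → Prop) (𝓕 : Set (Set U)) (M F : Set U) : Set (Set U) :=
  {G | G ∈ 𝓕 ∧ upp R M ⊆ upp R G ∧ upp R G ⊆ upp R F ∧
    ∀ G' ∈ 𝓕, upp R M ⊆ upp R G' → upp R G' ⊆ upp R F → upp R G ⊆ upp R G'}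

/-- `S*(M, F) = {G ∈ S(M, F) | G ⊆ upp R F}`. -/
def SStar {U : Type*} (R : U → U → Prop) (𝓕 : Set (Set U)) (M F : Set U) : Set (Set U) :=
  {G | G ∈ SFam R 𝓕 M F ∧ G ⊆ upp R F}

/-- sL-approximation space. -/
def IsSLApprox {U : Type*} (R : U → U → Prop) (𝓕 : Set (Set U)) : Prop :=
  IsCFApprox R 𝓕 ∧
    ∀ M ∈ joinSat 𝓕, ∀ F ∈ 𝓕, M ⊆ upp R F → (SFam R 𝓕 M F).Nonempty

/-- L-approximation space. -/
def IsLApprox {U : Type*} (R : U → U → Prop) (𝓕 : Set (Set U)) : Prop :=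
  IsCFApprox R 𝓕 ∧
    ∀ M ∈ joinSat 𝓕 ∪ {(∅ : Set U)}, ∀ F ∈ 𝓕, M ⊆ upp R F → (SFam R 𝓕 M F).Nonempty

/-- bc-approximation space. -/
def IsBCApprox {U : Type*} (R : U → U → Prop) (𝓕 : Set (Set U)) : Prop :=
  IsCFApprox R 𝓕 ∧
    ∀ M ∈ joinSat 𝓕 ∪ {(∅ : Set U)}, ∀ F ∈ 𝓕, M ⊆ upp R F →
      ∃ G ∈ 𝓕, upp R M ⊆ upp R G ∧ upp R G ⊆ upp R F ∧
        ∀ G' ∈ 𝓕, upp R M ⊆ upp R G' → upp R G ⊆ upp R G'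

/-- A dcpo: every (nonempty) directed subset has a supremum. -/
def IsDcpo (P : Type*) [PartialOrder P] : Prop :=
  ∀ D : Set P, D.Nonempty → DirectedOn (· ≤ ·) D → ∃ s, IsLUB D s

/-- The way-below relation `x ≪ y`. -/
def WayBelow {P : Type*} [PartialOrder P] (x y : P) : Prop :=
  ∀ D : Set P, D.Nonempty → DirectedOn (· ≤ ·) D →
    ∀ s, IsLUB D s → y ≤ s → ∃ d ∈ D, x ≤ d

/-- Continuous domain: a dcpo in which for every `x` the set `{z | z ≪ x}` is
directed with supremum `x`. -/
def IsContinuousDomain (P : Type*) [PartialOrder P] : Prop :=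
  IsDcpo P ∧ ∀ x : P, {z | WayBelow z x}.Nonempty ∧
    DirectedOn (· ≤ ·) {z | WayBelow z x} ∧ IsLUB {z | WayBelow z x} x

/-- Algebraic domain: a dcpo in which for every `x` the set `↓x ∩ K(P)` is
directed with supremum `x`. -/
def IsAlgebraicDomain (P : Type*) [PartialOrder P] : Prop :=
  IsDcpo P ∧ ∀ x : P, ({k | k ≤ x ∧ WayBelow k k}).Nonempty ∧
    DirectedOn (· ≤ ·) {k | k ≤ x ∧ WayBelow k k} ∧
    IsLUB {k | k ≤ x ∧ WayBelow k k} x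

/-- sL-domain: a continuous domain in which every principal ideal is a
sup-semilattice. -/
def IsSLDomain (P : Type*) [PartialOrder P] : Prop :=
  IsContinuousDomain P ∧ ∀ x a b : P, a ≤ x → b ≤ x →
    ∃ s, s ≤ x ∧ a ≤ s ∧ b ≤ s ∧ ∀ t, t ≤ x → a ≤ t → b ≤ t → s ≤ t

/-- L-domain: a continuous domain in which every principal ideal is a
complete lattice (every subset of `↓x` has a least upper bound in `↓x`). -/
def IsLDomain (P : Type*) [PartialOrder P] : Prop :=
  IsContinuousDomain P ∧ ∀ (x : P) (A : Set P), (∀ a ∈ A, a ≤ x) →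
    ∃ s, s ≤ x ∧ (∀ a ∈ A, a ≤ s) ∧ ∀ t, t ≤ x → (∀ a ∈ A, a ≤ t) → s ≤ t

/-- bc-domain: a continuous domain in which every up-bounded subset has a
supremum. -/
def IsBCDomain (P : Type*) [PartialOrder P] : Prop :=
  IsContinuousDomain P ∧ ∀ A : Set P, (∃ b, ∀ a ∈ A, a ≤ b) → ∃ s, IsLUB A s

open Set

/-!
CF-closed sets are closed under directed unions, so they form a dcpo; a CF-closed `E` is the
directed union of the sets `upp R F` with `F ∈ 𝓕`, `F ⊆ E`, and each of these is way below `E`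
because `F` is finite. For the principal ideal below `X`, the key observation is that for a
minimal `G ∈ S(M, F)` the set `upp R G` does not depend on the window `F`: enlarging the window
keeps `G` minimal. Hence the join of `A, B ≤ X` is the directed union of the `upp R G`,
`G ∈ S(M, F)`, over `M ∈ 𝓕^♯` inside `A ∪ B` and `F ∈ 𝓕` inside `X`.
-/

section Order

variable {P : Type*} [PartialOrder P]

lemma WayBelow.le {x y : P} (h : WayBelow x y) : x ≤ y := by
  obtain ⟨d, hd, hxd⟩ :=
    h {y} (singleton_nonempty y) (directedOn_singleton y) y isLUB_singleton le_rfl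
  rwa [mem_singleton_iff.1 hd] at hxd

lemma wayBelow_approximates_of_basis {x : P} {B : Set P} (hne : B.Nonempty)
    (hdir : DirectedOn (· ≤ ·) B) (hlub : IsLUB B x) (hB : ∀ b ∈ B, WayBelow b x) :
    {z | WayBelow z x}.Nonempty ∧ DirectedOn (· ≤ ·) {z | WayBelow z x} ∧
      IsLUB {z | WayBelow z x} x := by
  have le_basis : ∀ z, WayBelow z x → ∃ b ∈ B, z ≤ b := fun z hz => hz B hne hdir x hlub le_rfl
  refine ⟨hne.mono hB, fun z hz z' hz' => ?_,
    fun z hz => hz.le, fun t ht => hlub.2 fun b hb => ht (hB b hb)⟩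
  obtain ⟨b, hb, hzb⟩ := le_basis z hz
  obtain ⟨b', hb', hzb'⟩ := le_basis z' hz'
  obtain ⟨c, hc, hbc, hb'c⟩ := hdir b hb b' hb'
  exact ⟨c, hB c hc, hzb.trans hbc, hzb'.trans hb'c⟩

end Order

lemma isLUB_subtype_sUnion {U : Type*} {p : Set U → Prop} (D : Set {E // p E})
    (h : p (⋃₀ (Subtype.val '' D))) : IsLUB D ⟨_, h⟩ :=
  ⟨fun d hd => subset_sUnion_of_mem ⟨d, hd, rfl⟩,
    fun _ ht => sUnion_subset (by rintro _ ⟨d, hd, rfl⟩; exact ht hd)⟩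

section CFApproximation

variable {U : Type*} {R : U → U → Prop} {𝓕 : Set (Set U)}

lemma IsCFApprox.isTrans (hCF : IsCFApprox R 𝓕) : IsTrans U R := ⟨hCF.1⟩

lemma upp_mono {A B : Set U} (h : A ⊆ B) : upp R A ⊆ upp R B :=
  fun _ ⟨y, hy, hxy⟩ => ⟨y, h hy, hxy⟩

lemma upp_union (A B : Set U) : upp R (A ∪ B) = upp R A ∪ upp R B := by
  ext x
  simp [upp, or_and_right, exists_or]

lemma upp_subset_upp_of_subset_upp [IsTrans U R] {A F : Set U} (h : A ⊆ upp R F) :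
    upp R A ⊆ upp R F := by
  rintro x ⟨y, hy, hxy⟩
  obtain ⟨z, hz, hyz⟩ := h hy
  exact ⟨z, hz, trans_of R hxy hyz⟩

lemma CFClosed.upp_subset [IsTrans U R] {E F : Set U} (hE : CFClosed R 𝓕 E) (hF : F.Finite)
    (hFE : F ⊆ E) : upp R F ⊆ E := by
  obtain ⟨H, -, hFH, hHE, -⟩ := hE F hF hFE
  exact (upp_subset_upp_of_subset_upp hFH).trans hHE

lemma cfClosed_upp (hCF : IsCFApprox R 𝓕) {F : Set U} (hF : F ∈ 𝓕) : CFClosed R 𝓕 (upp R F) := by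
  have := hCF.isTrans
  intro K hK hKF
  obtain ⟨G, hG, hKG, hGF⟩ := hCF.2.2.2 F hF K hK hKF
  exact ⟨G, hG, hKG, upp_subset_upp_of_subset_upp hGF, hGF⟩

lemma cfClosed_sUnion {D : Set (Set U)} (hne : D.Nonempty) (hdir : DirectedOn (· ⊆ ·) D)
    (hD : ∀ E ∈ D, CFClosed R 𝓕 E) : CFClosed R 𝓕 (⋃₀ D) := by
  intro K hK hKD
  obtain ⟨E, hE, hKE⟩ := hdir.exists_mem_subset_of_finite_of_subset_sUnion hne hK hKD
  obtain ⟨F, hF, hKF, hFE, hFE'⟩ := hD E hE K hK hKE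
  exact ⟨F, hF, hKF, hFE.trans (subset_sUnion_of_mem hE), hFE'.trans (subset_sUnion_of_mem hE)⟩

lemma cfClosed_sUnion_image_val {D : Set {E // CFClosed R 𝓕 E}} (hne : D.Nonempty)
    (hdir : DirectedOn (· ≤ ·) D) : CFClosed R 𝓕 (⋃₀ (Subtype.val '' D)) :=
  cfClosed_sUnion (hne.image _) (directedOn_image.2 hdir) (by rintro _ ⟨E, -, rfl⟩; exact E.2)

lemma isDcpo_cfClosed : IsDcpo {E // CFClosed R 𝓕 E} := fun _ hne hdir =>
  ⟨_, isLUB_subtype_sUnion _ (cfClosed_sUnion_image_val hne hdir)⟩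

lemma wayBelow_upp (hCF : IsCFApprox R 𝓕) {F : Set U} (hF : F ∈ 𝓕) {E : {E // CFClosed R 𝓕 E}}
    (hFE : F ⊆ E.val) :
    WayBelow (⟨upp R F, cfClosed_upp hCF hF⟩ : {E // CFClosed R 𝓕 E}) E := by
  have := hCF.isTrans
  intro D hne hdir s hs hEs
  have hFD : F ⊆ ⋃₀ (Subtype.val '' D) := by
    rw [hs.unique (isLUB_subtype_sUnion _ (cfClosed_sUnion_image_val hne hdir))] at hEs
    exact hFE.trans hEs
  have hdir' : DirectedOn (· ⊆ ·) (Subtype.val '' D) := directedOn_image.2 hdir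
  obtain ⟨_, ⟨d, hd, rfl⟩, hFd⟩ :=
    hdir'.exists_mem_subset_of_finite_of_subset_sUnion (hne.image _) (hCF.2.2.1 F hF) hFD
  exact ⟨d, hd, d.2.upp_subset (hCF.2.2.1 F hF) hFd⟩

lemma exists_basis_wayBelow_cfClosed (hCF : IsCFApprox R 𝓕) (E : {E // CFClosed R 𝓕 E}) :
    ∃ B : Set {E // CFClosed R 𝓕 E}, B.Nonempty ∧ DirectedOn (· ≤ ·) B ∧ IsLUB B E ∧
      ∀ b ∈ B, WayBelow b E := by
  have := hCF.isTrans
  have hfin := hCF.2.2.1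
  refine ⟨{z | ∃ F ∈ 𝓕, F ⊆ E.val ∧ z.val = upp R F}, ?_, ?_, ⟨?_, ?_⟩, ?_⟩
  · obtain ⟨F, hF, -, -, hFE⟩ := E.2 ∅ finite_empty (empty_subset _)
    exact ⟨⟨upp R F, cfClosed_upp hCF hF⟩, F, hF, hFE, rfl⟩
  · rintro z ⟨F, hF, hFE, hz⟩ z' ⟨F', hF', hF'E, hz'⟩
    obtain ⟨G, hG, hFG, -, hGE⟩ :=
      E.2 (F ∪ F') ((hfin F hF).union (hfin F' hF')) (union_subset hFE hF'E)
    refine ⟨⟨upp R G, cfClosed_upp hCF hG⟩, ⟨G, hG, hGE, rfl⟩, ?_, ?_⟩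
    · show z.val ⊆ _
      exact hz ▸ upp_subset_upp_of_subset_upp (subset_union_left.trans hFG)
    · show z'.val ⊆ _
      exact hz' ▸ upp_subset_upp_of_subset_upp (subset_union_right.trans hFG)
  · rintro z ⟨F, hF, hFE, hz⟩
    show z.val ⊆ E.val
    exact hz ▸ E.2.upp_subset (hfin F hF) hFE
  · intro t ht y hy
    obtain ⟨F, hF, hyF, -, hFE⟩ := E.2 {y} (finite_singleton y) (singleton_subset_iff.2 hy)
    exact ht (a := ⟨upp R F, cfClosed_upp hCF hF⟩) ⟨F, hF, hFE, rfl⟩ (hyF rfl)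
  · rintro z ⟨F, hF, hFE, hz⟩
    obtain rfl : z = ⟨upp R F, cfClosed_upp hCF hF⟩ := Subtype.ext hz
    exact wayBelow_upp hCF hF hFE

lemma isContinuousDomain_cfClosed (hCF : IsCFApprox R 𝓕) :
    IsContinuousDomain {E // CFClosed R 𝓕 E} := by
  refine ⟨isDcpo_cfClosed, fun E => ?_⟩
  obtain ⟨B, hne, hdir, hlub, hB⟩ := exists_basis_wayBelow_cfClosed hCF E
  exact wayBelow_approximates_of_basis hne hdir hlub hB

lemma mem_joinSat {F : Set U} (hF : F ∈ 𝓕) : F ∈ joinSat 𝓕 :=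
  ⟨{F}, singleton_subset_iff.2 hF, finite_singleton F, singleton_nonempty F,
    (sUnion_singleton F).symm⟩

lemma union_mem_joinSat {M M' : Set U} (hM : M ∈ joinSat 𝓕) (hM' : M' ∈ joinSat 𝓕) :
    M ∪ M' ∈ joinSat 𝓕 := by
  obtain ⟨𝓐, h𝓐, h𝓐fin, h𝓐ne, rfl⟩ := hM
  obtain ⟨𝓐', h𝓐', h𝓐'fin, -, rfl⟩ := hM'
  exact ⟨𝓐 ∪ 𝓐', union_subset h𝓐 h𝓐', h𝓐fin.union h𝓐'fin, h𝓐ne.mono subset_union_left,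
    (sUnion_union _ _).symm⟩

lemma finite_of_mem_joinSat (hfin : ∀ F ∈ 𝓕, F.Finite) {M : Set U} (hM : M ∈ joinSat 𝓕) :
    M.Finite := by
  obtain ⟨𝓐, h𝓐, h𝓐fin, -, rfl⟩ := hM
  exact h𝓐fin.sUnion fun F hF => hfin F (h𝓐 hF)

lemma upp_eq_of_mem_SFam {M F F' G G' : Set U} (hFF' : upp R F ⊆ upp R F')
    (hG : G ∈ SFam R 𝓕 M F) (hG' : G' ∈ SFam R 𝓕 M F') : upp R G = upp R G' := by
  obtain ⟨hG𝓕, hMG, hGF, hGmin⟩ := hG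
  obtain ⟨hG'𝓕, hMG', -, hG'min⟩ := hG'
  have hG'G : upp R G' ⊆ upp R G := hG'min G hG𝓕 hMG (hGF.trans hFF')
  exact (hGmin G' hG'𝓕 hMG' (hG'G.trans hGF)).antisymm hG'G

def SFamNonempty (R : U → U → Prop) (𝓕 : Set (Set U)) : Prop :=
  ∀ M ∈ joinSat 𝓕, ∀ F ∈ 𝓕, upp R M ⊆ upp R F → (SFam R 𝓕 M F).Nonempty

lemma SFamNonempty.upp_subset (hS : SFamNonempty R 𝓕) {M F F' G H : Set U}
    (hM : M ∈ joinSat 𝓕) (hG : G ∈ SFam R 𝓕 M F) (hF' : F' ∈ 𝓕) (hFF' : upp R F ⊆ upp R F')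
    (hH : H ∈ 𝓕) (hMH : upp R M ⊆ upp R H) (hHF' : upp R H ⊆ upp R F') :
    upp R G ⊆ upp R H := by
  obtain ⟨G', hG'⟩ := hS M hM F' hF' (hMH.trans hHF')
  rw [upp_eq_of_mem_SFam hFF' hG hG']
  exact hG'.2.2.2 H hH hMH hHF'

/-- Its union is the least CF-closed set between `Y` and `X` (`Y` a union of CF-closed sets). -/
def joinApprox (R : U → U → Prop) (𝓕 : Set (Set U)) (Y X : Set U) : Set (Set U) :=
  {S | ∃ M ∈ joinSat 𝓕, M ⊆ Y ∧ ∃ F ∈ 𝓕, F ⊆ X ∧ ∃ G ∈ SFam R 𝓕 M F, S = upp R G}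

lemma cfClosed_of_mem_joinApprox (hCF : IsCFApprox R 𝓕) {Y X S : Set U}
    (hSmem : S ∈ joinApprox R 𝓕 Y X) : CFClosed R 𝓕 S := by
  obtain ⟨_, _, _, _, _, _, G, hG, rfl⟩ := hSmem
  exact cfClosed_upp hCF hG.1

lemma exists_mem_joinApprox_upp_subset (hCF : IsCFApprox R 𝓕) (hS : SFamNonempty R 𝓕)
    {Y X M : Set U} (hX : CFClosed R 𝓕 X) (hYX : Y ⊆ X) (hM : M ∈ joinSat 𝓕) (hMY : M ⊆ Y) :
    ∃ S ∈ joinApprox R 𝓕 Y X, upp R M ⊆ S := by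
  have := hCF.isTrans
  obtain ⟨F, hF, hMF, -, hFX⟩ := hX M (finite_of_mem_joinSat hCF.2.2.1 hM) (hMY.trans hYX)
  obtain ⟨G, hG⟩ := hS M hM F hF (upp_subset_upp_of_subset_upp hMF)
  exact ⟨upp R G, ⟨M, hM, hMY, F, hF, hFX, G, hG, rfl⟩, hG.2.1⟩

lemma directedOn_joinApprox (hCF : IsCFApprox R 𝓕) (hS : SFamNonempty R 𝓕) {Y X : Set U}
    (hX : CFClosed R 𝓕 X) : DirectedOn (· ⊆ ·) (joinApprox R 𝓕 Y X) := by
  have := hCF.isTrans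
  rintro _ ⟨M, hM, hMY, F, hF, hFX, G, hG, rfl⟩ _ ⟨M', hM', hM'Y, F', hF', hF'X, G', hG', rfl⟩
  obtain ⟨F'', hF'', hFF'', -, hF''X⟩ :=
    hX (F ∪ F') ((hCF.2.2.1 F hF).union (hCF.2.2.1 F' hF')) (union_subset hFX hF'X)
  have hwin : upp R F ⊆ upp R F'' :=
    upp_subset_upp_of_subset_upp (subset_union_left.trans hFF'')
  have hwin' : upp R F' ⊆ upp R F'' :=
    upp_subset_upp_of_subset_upp (subset_union_right.trans hFF'')
  have hMM' := union_mem_joinSat hM hM'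
  obtain ⟨G'', hG''⟩ := hS _ hMM' F'' hF'' <| by
    rw [upp_union]
    exact union_subset (hG.2.1.trans (hG.2.2.1.trans hwin)) (hG'.2.1.trans (hG'.2.2.1.trans hwin'))
  refine ⟨upp R G'', ⟨_, hMM', union_subset hMY hM'Y, F'', hF'', hF''X, G'', hG'', rfl⟩, ?_, ?_⟩
  · exact hS.upp_subset hM hG hF'' hwin hG''.1 ((upp_mono subset_union_left).trans hG''.2.1)
      hG''.2.2.1
  · exact hS.upp_subset hM' hG' hF'' hwin' hG''.1 ((upp_mono subset_union_right).trans hG''.2.1)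
      hG''.2.2.1

lemma sUnion_joinApprox_subset (hCF : IsCFApprox R 𝓕) (hS : SFamNonempty R 𝓕) {Y X T : Set U}
    (hX : CFClosed R 𝓕 X) (hT : CFClosed R 𝓕 T) (hYT : Y ⊆ T) (hTX : T ⊆ X) :
    ⋃₀ joinApprox R 𝓕 Y X ⊆ T := by
  have := hCF.isTrans
  have hfin := hCF.2.2.1
  refine sUnion_subset ?_
  rintro _ ⟨M, hM, hMY, F, hF, hFX, G, hG, rfl⟩
  obtain ⟨H, hH, hMH, hHT, hHT'⟩ := hT M (finite_of_mem_joinSat hfin hM) (hMY.trans hYT)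
  obtain ⟨F', hF', hFHF', -, -⟩ :=
    hX (F ∪ H) ((hfin F hF).union (hfin H hH)) (union_subset hFX (hHT'.trans hTX))
  refine (hS.upp_subset hM hG hF' ?_ hH (upp_subset_upp_of_subset_upp hMH) ?_).trans hHT
  · exact upp_subset_upp_of_subset_upp (subset_union_left.trans hFHF')
  · exact upp_subset_upp_of_subset_upp (subset_union_right.trans hFHF')

lemma subset_sUnion_joinApprox (hCF : IsCFApprox R 𝓕) (hS : SFamNonempty R 𝓕) {Y X A : Set U}
    (hX : CFClosed R 𝓕 X) (hYX : Y ⊆ X) (hA : CFClosed R 𝓕 A) (hAY : A ⊆ Y) :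
    A ⊆ ⋃₀ joinApprox R 𝓕 Y X := by
  intro y hy
  obtain ⟨F, hF, hyF, -, hFA⟩ := hA {y} (finite_singleton y) (singleton_subset_iff.2 hy)
  obtain ⟨S, hSmem, hFS⟩ :=
    exists_mem_joinApprox_upp_subset hCF hS hX hYX (mem_joinSat hF) (hFA.trans hAY)
  exact ⟨S, hSmem, hFS (hyF rfl)⟩

lemma exists_sup_le_cfClosed (hCF : IsCFApprox R 𝓕) (hS : SFamNonempty R 𝓕)
    (x a b : {E // CFClosed R 𝓕 E}) (hax : a ≤ x) (hbx : b ≤ x) :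
    ∃ s, s ≤ x ∧ a ≤ s ∧ b ≤ s ∧ ∀ t, t ≤ x → a ≤ t → b ≤ t → s ≤ t := by
  have hYX : a.val ∪ b.val ⊆ x.val := union_subset hax hbx
  obtain ⟨F, hF, -, -, hFa⟩ := a.2 ∅ finite_empty (empty_subset _)
  obtain ⟨S, hSmem, -⟩ :=
    exists_mem_joinApprox_upp_subset hCF hS x.2 hYX (mem_joinSat hF) (hFa.trans subset_union_left)
  have hs : CFClosed R 𝓕 (⋃₀ joinApprox R 𝓕 (a.val ∪ b.val) x.val) :=
    cfClosed_sUnion ⟨S, hSmem⟩ (directedOn_joinApprox hCF hS x.2)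
      fun _ h => cfClosed_of_mem_joinApprox hCF h
  exact ⟨⟨_, hs⟩, sUnion_joinApprox_subset hCF hS x.2 x.2 hYX subset_rfl,
    subset_sUnion_joinApprox hCF hS x.2 hYX a.2 subset_union_left,
    subset_sUnion_joinApprox hCF hS x.2 hYX b.2 subset_union_right,
    fun t htx hat hbt => sUnion_joinApprox_subset hCF hS x.2 t.2 (union_subset hat hbt) htx⟩

end CFApproximation

/-- if `S*(K, F) ≠ ∅` for all `K ∈ 𝓕^♯` and `F ∈ 𝓕` with
`upp R K ⊆ upp R F`, then `(𝔠(U, R, 𝓕), ⊆)` is an sL-domain. -/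
theorem stmt8 {U : Type*} (R : U → U → Prop) (𝓕 : Set (Set U))
    (hCF : IsCFApprox R 𝓕)
    (hS : ∀ K ∈ joinSat 𝓕, ∀ F ∈ 𝓕, upp R K ⊆ upp R F →
      (SStar R 𝓕 K F).Nonempty) :
    IsSLDomain {E : Set U // CFClosed R 𝓕 E} :=
  ⟨isContinuousDomain_cfClosed hCF, exists_sup_le_cfClosed hCF fun M hM F hF hMF =>
    (hS M hM F hF hMF).mono fun _ hG => hG.1⟩
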